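/- For every formula φ ∈ L_RS the following hold: (a) for every S ⊆ Act, S ∈ I(φ) if and only if there is a process p with I(p) = S and p ⊨ φ; (b) φ is unsatisfiable if and only if I(φ) = ∅. -/

import Mathlib

/-- Finite, loop-free CCS processes over the action set `Act`:
`p ::= 0 | a.p | p + p`. -/
inductive Proc (Act : Type) : Type
  | nil : Proc Act
  | pre : Act → Proc Act → Proc Act
  | plus : Proc Act → Proc Act → Proc Act

/-- The transition relation: `a.p —a→ p`, and `p₁ + p₂ —a→ p'` iff
`p₁ —a→ p'` or `p₂ —a→ p'`. -/
inductive Step {Act : Type} : Proc Act → Act → Proc Act → Prop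
  | pre (a : Act) (p : Proc Act) : Step (Proc.pre a p) a p
  | plusL : ∀ {p₁ p₂ p' : Proc Act} {a : Act},
      Step p₁ a p' → Step (Proc.plus p₁ p₂) a p'
  | plusR : ∀ {p₁ p₂ p' : Proc Act} {a : Act},
      Step p₂ a p' → Step (Proc.plus p₁ p₂) a p'

/-- HML formulas in negation normal form:
`φ ::= tt | ff | φ∧φ | φ∨φ | ⟨a⟩φ | [a]φ`. -/
inductive HML (Act : Type) : Type
  | tt : HML Act
  | ff : HML Act
  | conj : HML Act → HML Act → HML Act
  | disj : HML Act → HML Act → HML Act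
  | dia : Act → HML Act → HML Act
  | box : Act → HML Act → HML Act

/-- The satisfaction relation `p ⊨ φ`. -/
def Sat {Act : Type} : Proc Act → HML Act → Prop
  | _, HML.tt => True
  | _, HML.ff => False
  | p, HML.conj φ ψ => Sat p φ ∧ Sat p ψ
  | p, HML.disj φ ψ => Sat p φ ∨ Sat p ψ
  | p, HML.dia a φ => ∃ p', Step p a p' ∧ Sat p' φ
  | p, HML.box a φ => ∀ p', Step p a p' → Sat p' φ

/-- `φ` entails `ψ` iff every process satisfying `φ` satisfies `ψ`. -/
def Entails {Act : Type} (φ ψ : HML Act) : Prop :=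
  ∀ p : Proc Act, Sat p φ → Sat p ψ

/-- `R` is a simulation relation. -/
def IsSimulation {Act : Type} (R : Proc Act → Proc Act → Prop) : Prop :=
  ∀ p q, R p q → ∀ a p', Step p a p' → ∃ q', Step q a q' ∧ R p' q'

/-- The simulation preorder `≲_S`: the largest simulation. -/
def Sim {Act : Type} (p q : Proc Act) : Prop :=
  ∃ R, IsSimulation R ∧ R p q

/-- The set `I(p)` of initial actions of a process. -/
def initials {Act : Type} (p : Proc Act) : Set Act :=
  {a | ∃ p', Step p a p'}

/-- The fragment `L_RS`: `φ ::= tt | ff | φ∧φ | φ∨φ | ⟨a⟩φ | [a]ff`. -/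
inductive InLRS {Act : Type} : HML Act → Prop
  | tt : InLRS HML.tt
  | ff : InLRS HML.ff
  | conj : ∀ {φ ψ : HML Act}, InLRS φ → InLRS ψ → InLRS (HML.conj φ ψ)
  | disj : ∀ {φ ψ : HML Act}, InLRS φ → InLRS ψ → InLRS (HML.disj φ ψ)
  | dia : ∀ {a : Act} {φ : HML Act}, InLRS φ → InLRS (HML.dia a φ)
  | boxff : ∀ {a : Act}, InLRS (HML.box a HML.ff)

/-- The set `I(φ)` of possible initial-action sets for `φ ∈ L_RS`:
`I(tt) = 2^Act`, `I(ff) = ∅`, `I([a]ff) = {X | a ∉ X}`,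
`I(⟨a⟩φ) = ∅` if `I(φ) = ∅` and `{X | a ∈ X}` otherwise,
`I(φ₁∨φ₂) = I(φ₁) ∪ I(φ₂)`, `I(φ₁∧φ₂) = I(φ₁) ∩ I(φ₂)`. -/
def Iset {Act : Type} : HML Act → Set (Set Act)
  | HML.tt => Set.univ
  | HML.ff => ∅
  | HML.conj φ ψ => Iset φ ∩ Iset ψ
  | HML.disj φ ψ => Iset φ ∪ Iset ψ
  | HML.dia a φ => {X : Set Act | a ∈ X ∧ (Iset φ).Nonempty}
  | HML.box a _ => {X : Set Act | a ∉ X}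

/-! Every formula of `L_RS` constrains the initial actions of a process only through its
subformulas `[a]ff`. Hence adding a summand whose initial actions already occur preserves
satisfaction, so two witnesses with the same initial set `S` of a conjunction `φ ∧ ψ` can be
merged by `+`; and every finite `S` is the initial set of `∑_{a ∈ S} a.0`, which gives witnesses
for `tt`, `[a]ff` and (after adding `a.q`) for `⟨a⟩φ`. -/

namespace Proc

variable {Act : Type}

@[simp]
lemma initials_nil : initials (nil : Proc Act) = ∅ := by
  ext a
  simp only [initials, Set.mem_ofPred_eq, Set.mem_empty_iff_false, iff_false]
  rintro ⟨p, h⟩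
  cases h

@[simp]
lemma initials_pre (a : Act) (p : Proc Act) : initials (pre a p) = {a} := by
  ext b
  constructor
  · rintro ⟨p', h⟩
    cases h
    rfl
  · rintro rfl
    exact ⟨p, Step.pre _ p⟩

lemma step_plus_iff {p q r : Proc Act} {a : Act} :
    Step (plus p q) a r ↔ Step p a r ∨ Step q a r := by
  constructor
  · rintro (_ | h | h)
    exacts [Or.inl h, Or.inr h]
  · rintro (h | h)
    exacts [Step.plusL h, Step.plusR h]

@[simp]
lemma initials_plus (p q : Proc Act) : initials (plus p q) = initials p ∪ initials q := by
  ext a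
  simp only [initials, step_plus_iff, exists_or, Set.mem_ofPred_eq, Set.mem_union]

lemma exists_initials_eq {S : Set Act} (hS : S.Finite) : ∃ p : Proc Act, initials p = S := by
  induction S, hS using Set.Finite.induction_on with
  | empty => exact ⟨nil, initials_nil⟩
  | @insert a S _ _ ih =>
    obtain ⟨p, hp⟩ := ih
    exact ⟨plus (pre a nil) p, by rw [initials_plus, initials_pre, hp, Set.insert_eq]⟩

end Proc

open Proc

variable {Act : Type}

lemma sat_congr {p q : Proc Act} (hpq : ∀ a r, Step p a r ↔ Step q a r) (φ : HML Act) :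
    Sat p φ ↔ Sat q φ := by
  induction φ <;> simp only [Sat, *]

lemma Sat.plus_left {φ : HML Act} (hφ : InLRS φ) {p : Proc Act} (hp : Sat p φ) {q : Proc Act}
    (hq : initials q ⊆ initials p) : Sat (plus p q) φ := by
  induction hφ with
  | tt => trivial
  | ff => exact hp
  | conj _ _ ih₁ ih₂ => exact ⟨ih₁ hp.1, ih₂ hp.2⟩
  | disj _ _ ih₁ ih₂ => exact hp.imp ih₁ ih₂
  | dia _ _ =>
    obtain ⟨p', hs, hp'⟩ := hp
    exact ⟨p', Step.plusL hs, hp'⟩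
  | boxff =>
    intro r hs
    rcases step_plus_iff.mp hs with hs | hs
    · exact hp r hs
    · obtain ⟨r', hs'⟩ := hq ⟨r, hs⟩
      exact hp r' hs'

lemma Sat.plus_right {φ : HML Act} (hφ : InLRS φ) {q : Proc Act} (hq : Sat q φ) {p : Proc Act}
    (hp : initials p ⊆ initials q) : Sat (plus p q) φ :=
  (sat_congr (fun _ _ => by simp only [step_plus_iff, or_comm]) φ).mp (hq.plus_left hφ hp)

lemma mem_Iset_iff [Finite Act] {φ : HML Act} (hφ : InLRS φ) (S : Set Act) :
    S ∈ Iset φ ↔ ∃ p : Proc Act, initials p = S ∧ Sat p φ := by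
  induction hφ generalizing S with
  | tt =>
    simpa only [Iset, Set.mem_univ, Sat, and_true, true_iff] using exists_initials_eq S.toFinite
  | ff => simp only [Iset, Set.mem_empty_iff_false, Sat, and_false, exists_false]
  | conj hφ hψ ihφ ihψ =>
    constructor
    · rintro ⟨hSφ, hSψ⟩
      obtain ⟨p, rfl, hp⟩ := (ihφ _).mp hSφ
      obtain ⟨q, hpq, hq⟩ := (ihψ _).mp hSψ
      refine ⟨plus p q, by simp [hpq], hp.plus_left hφ hpq.le, hq.plus_right hψ hpq.ge⟩
    · rintro ⟨p, rfl, hpφ, hpψ⟩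
      exact ⟨(ihφ _).mpr ⟨p, rfl, hpφ⟩, (ihψ _).mpr ⟨p, rfl, hpψ⟩⟩
  | disj _ _ ihφ ihψ =>
    simp only [Iset, Set.mem_union, ihφ, ihψ, Sat, and_or_left, exists_or]
  | @dia a φ _ ih =>
    constructor
    · rintro ⟨haS, X, hX⟩
      obtain ⟨q, -, hq⟩ := (ih X).mp hX
      obtain ⟨p, hp⟩ := exists_initials_eq S.toFinite
      exact ⟨plus (pre a q) p, by simpa [hp], q, Step.plusL (Step.pre a q), hq⟩
    · rintro ⟨p, rfl, p', hs, hp'⟩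
      exact ⟨⟨p', hs⟩, initials p', (ih _).mpr ⟨p', rfl, hp'⟩⟩
  | @boxff a =>
    constructor
    · intro haS
      obtain ⟨p, rfl⟩ := exists_initials_eq S.toFinite
      exact ⟨p, rfl, fun p' hs => haS ⟨p', hs⟩⟩
    · rintro ⟨p, rfl, hp⟩ ⟨p', hs⟩
      exact hp p' hs

theorem Iset_spec_general {Act : Type} [Fintype Act]
    (φ : HML Act) (h : InLRS φ) :
    (∀ S : Set Act, S ∈ Iset φ ↔ ∃ p : Proc Act, initials p = S ∧ Sat p φ) ∧
    ((¬ ∃ p : Proc Act, Sat p φ) ↔ Iset φ = ∅) := by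
  refine ⟨mem_Iset_iff h, ?_⟩
  simp only [Set.eq_empty_iff_forall_notMem, mem_Iset_iff h]
  constructor
  · rintro hunsat S ⟨p, -, hp⟩
    exact hunsat ⟨p, hp⟩
  · rintro hempty ⟨p, hp⟩
    exact hempty _ ⟨p, rfl, hp⟩

/-- For every `φ ∈ L_RS`: (a) for every `S ⊆ Act`, `S ∈ I(φ)` iff there is a
process `p` with `I(p) = S` and `p ⊨ φ`; (b) `φ` is unsatisfiable iff
`I(φ) = ∅`. -/
theorem Iset_spec {Act : Type} [Fintype Act] [Nonempty Act]
    (φ : HML Act) (h : InLRS φ) :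
    (∀ S : Set Act, S ∈ Iset φ ↔ ∃ p : Proc Act, initials p = S ∧ Sat p φ) ∧
    ((¬ ∃ p : Proc Act, Sat p φ) ↔ Iset φ = ∅) :=
  Iset_spec_general φ h
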